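/- arXiv:2005.00821 — 9 statements merged into one kernel-verified Lean document; each statement's English description precedes it below -/
import Mathlib

section
/- If Q is a rate matrix (a real square matrix with nonnegative off-diagonal entries and rows summing to 0), then exp(tQ) is a Markov matrix (nonnegative entries, rows summing to 1) for all t ≥ 0. -/
open Matrix

/-- The continuous linear map sending a matrix to its `(i, j)` entry. -/
noncomputable def Matrix.entryCLM (n : ℕ) (i j : Fin n) :
    Matrix (Fin n) (Fin n) ℝ →L[ℝ] ℝ where
  toLinearMap :=
    { toFun := fun A => A i j
      map_add' := fun _ _ => rfl
      map_smul' := fun _ _ => rfl }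
  cont := (continuous_apply j).comp (continuous_apply i)

/-- The continuous linear map sending a matrix to its `i`-th row sum. -/
noncomputable def Matrix.rowSumCLM (n : ℕ) (i : Fin n) :
    Matrix (Fin n) (Fin n) ℝ →L[ℝ] ℝ where
  toLinearMap :=
    { toFun := fun A => ∑ j, A i j
      map_add' := fun _ _ => by simp [Finset.sum_add_distrib]
      map_smul' := fun _ _ => by simp [Finset.mul_sum]
      }
  cont := by
    show Continuous fun A : Matrix (Fin n) (Fin n) ℝ => ∑ j, A i j
    exact continuous_finset_sum _ fun j _ => (continuous_apply j).comp (continuous_apply i)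

theorem exp_clm_eq_tsum (n : ℕ) (A : Matrix (Fin n) (Fin n) ℝ)
    (f : Matrix (Fin n) (Fin n) ℝ →L[ℝ] ℝ) :
    f (NormedSpace.exp A) = ∑' k : ℕ, f ((k.factorial⁻¹ : ℝ) • A ^ k) := by
  letI : SeminormedRing (Matrix (Fin n) (Fin n) ℝ) := Matrix.linftyOpSemiNormedRing
  letI : NormedRing (Matrix (Fin n) (Fin n) ℝ) := Matrix.linftyOpNormedRing
  letI : NormedAlgebra ℝ (Matrix (Fin n) (Fin n) ℝ) := Matrix.linftyOpNormedAlgebra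
  rw [NormedSpace.exp_eq_tsum ℝ]
  exact f.map_tsum (NormedSpace.expSeries_summable' A)

theorem exp_entry_nonneg (n : ℕ) (B : Matrix (Fin n) (Fin n) ℝ)
    (hB : ∀ i j, 0 ≤ B i j) (i j : Fin n) : 0 ≤ NormedSpace.exp B i j := by
  have hpow : ∀ k : ℕ, ∀ i j, 0 ≤ (B ^ k) i j := by
    intro k
    induction k with
    | zero => intro i j; by_cases h : i = j <;> simp [pow_zero, Matrix.one_apply, h]
    | succ m ih =>
      intro i j
      rw [pow_succ, Matrix.mul_apply]
      exact Finset.sum_nonneg fun l _ => mul_nonneg (ih i l) (hB l j)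
  have := exp_clm_eq_tsum n B (Matrix.entryCLM n i j)
  have hEq : NormedSpace.exp B i j
      = ∑' k : ℕ, (k.factorial⁻¹ : ℝ) * (B ^ k) i j := by
    simp only [map_smul, smul_eq_mul] at this
    exact this
  rw [hEq]
  exact tsum_nonneg fun k =>
    mul_nonneg (by positivity) (hpow k i j)

theorem exp_rate_is_markov
    (n : ℕ) (Q : Matrix (Fin n) (Fin n) ℝ)
    (hoff : ∀ i j, i ≠ j → 0 ≤ Q i j)
    (hrow : ∀ i, ∑ j, Q i j = 0) :
    ∀ t : ℝ, 0 ≤ t →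
      (∀ i j, 0 ≤ NormedSpace.exp (t • Q) i j) ∧
      (∀ i, ∑ j, NormedSpace.exp (t • Q) i j = 1) := by
  intro t ht
  constructor
  · -- nonnegativity
    intro i j
    set c : ℝ := ∑ k, |t * Q k k| with hc
    have hcn : ∀ i, -(t * Q i i) ≤ c := by
      intro i
      calc -(t * Q i i) ≤ |t * Q i i| := neg_le_abs _
        _ ≤ c := Finset.single_le_sum (f := fun k => |t * Q k k|)
            (fun k _ => abs_nonneg _) (Finset.mem_univ i)
    set B : Matrix (Fin n) (Fin n) ℝ := t • Q + c • (1 : Matrix (Fin n) (Fin n) ℝ) with hBdef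
    have hB : ∀ i j, 0 ≤ B i j := by
      intro i j
      by_cases h : i = j
      · subst h
        simp only [hBdef, Matrix.add_apply, Matrix.smul_apply, Matrix.one_apply_eq,
          smul_eq_mul, mul_one]
        linarith [hcn i]
      · simp only [hBdef, Matrix.add_apply, Matrix.smul_apply, Matrix.one_apply_ne h,
          smul_eq_mul, mul_zero, add_zero]
        exact mul_nonneg ht (hoff i j h)
    have hsplit : t • Q = B + (-c) • (1 : Matrix (Fin n) (Fin n) ℝ) := by
      simp [hBdef, add_assoc, ← add_smul]
    have hcomm : Commute B ((-c) • (1 : Matrix (Fin n) (Fin n) ℝ)) :=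
      (Commute.one_right B).smul_right (-c)
    have hexp : NormedSpace.exp (t • Q)
        = NormedSpace.exp B * NormedSpace.exp ((-c) • (1 : Matrix (Fin n) (Fin n) ℝ)) := by
      rw [hsplit, Matrix.exp_add_of_commute _ _ hcomm]
    have hscalar : NormedSpace.exp ((-c) • (1 : Matrix (Fin n) (Fin n) ℝ))
        = Real.exp (-c) • (1 : Matrix (Fin n) (Fin n) ℝ) := by
      letI : SeminormedRing (Matrix (Fin n) (Fin n) ℝ) := Matrix.linftyOpSemiNormedRing
      letI : NormedRing (Matrix (Fin n) (Fin n) ℝ) := Matrix.linftyOpNormedRing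
      letI : NormedAlgebra ℝ (Matrix (Fin n) (Fin n) ℝ) := Matrix.linftyOpNormedAlgebra
      have h1 : ((-c) • (1 : Matrix (Fin n) (Fin n) ℝ))
          = algebraMap ℝ (Matrix (Fin n) (Fin n) ℝ) (-c) :=
        (Algebra.algebraMap_eq_smul_one (-c)).symm
      rw [h1]
      exact (NormedSpace.algebraMap_exp_comm (-c)).symm.trans (by
        rw [Algebra.algebraMap_eq_smul_one, Real.exp_eq_exp_ℝ])
    rw [hexp, hscalar, Matrix.mul_smul, Matrix.mul_one, Matrix.smul_apply, smul_eq_mul]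
    exact mul_nonneg (Real.exp_pos _).le (exp_entry_nonneg n B hB i j)
  · -- row sums
    intro i
    have hrowA : ∀ l, ∑ j, (t • Q) l j = 0 := by
      intro l
      simp [Matrix.smul_apply, smul_eq_mul, ← Finset.mul_sum, hrow l]
    have hpow : ∀ k : ℕ, 1 ≤ k → ∀ l, ∑ j, ((t • Q) ^ k) l j = 0 := by
      intro k hk l
      obtain ⟨m, rfl⟩ := Nat.exists_eq_add_of_le' hk
      rw [pow_succ]
      calc ∑ j, ((t • Q) ^ m * (t • Q)) l j
          = ∑ r, ((t • Q) ^ m) l r * ∑ j, (t • Q) r j := by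
            simp_rw [Matrix.mul_apply, Finset.mul_sum]
            rw [Finset.sum_comm]
        _ = 0 := by simp only [hrowA, mul_zero, Finset.sum_const_zero]
    have key := exp_clm_eq_tsum n (t • Q) (Matrix.rowSumCLM n i)
    have hEq : ∑ j, NormedSpace.exp (t • Q) i j
        = ∑' k : ℕ, (k.factorial⁻¹ : ℝ) * ∑ j, ((t • Q) ^ k) i j := by
      simpa [Matrix.rowSumCLM, Matrix.smul_apply, smul_eq_mul, Finset.mul_sum] using key
    rw [hEq]
    rw [tsum_eq_single 0]
    · simp [Matrix.one_apply]
    · intro k hk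
      rw [hpow k (Nat.one_le_iff_ne_zero.mpr hk) i, mul_zero]
end

section
/- For any integer k and any w = (0,0,0,w₄,w₅,w₆) ∈ ℝ⁶ with w₄² − w₅w₆ = −1/4, the matrix exponential of Q(2πk, w) equals the 4×4 identity matrix. -/
open Matrix Real

/-- The matrix `Q(θ, v)` from the paper, with `v i` denoting `vᵢ₊₁`. -/
def Qmat (θ : ℝ) (v : Fin 6 → ℝ) : Matrix (Fin 4) (Fin 4) ℝ :=
  !![v 0 + v 1 - v 2 - θ * v 3, -v 0 - v 1 + θ * v 4, -v 0 - v 1 - θ * v 4, v 0 + v 1 + v 2 + θ * v 3;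
     -v 0 + v 1 - θ * v 5, v 0 - v 1 - v 2 + θ * v 3, v 0 - v 1 + v 2 - θ * v 3, -v 0 + v 1 + θ * v 5;
     -v 0 + v 1 + θ * v 5, v 0 - v 1 + v 2 - θ * v 3, v 0 - v 1 - v 2 + θ * v 3, -v 0 + v 1 - θ * v 5;
     v 0 + v 1 + v 2 + θ * v 3, -v 0 - v 1 - θ * v 4, -v 0 - v 1 + θ * v 4, v 0 + v 1 - v 2 - θ * v 3]

namespace ExpQmatAux

variable (w₄ w₅ w₆ : ℝ)

/-- The base matrix `M` with `Q(θ, (0,0,0,w₄,w₅,w₆)) = θ • M`. -/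
noncomputable def Mmat : Matrix (Fin 4) (Fin 4) ℝ :=
  !![-w₄, w₅, -w₅, w₄; -w₆, w₄, -w₄, w₆; w₆, -w₄, w₄, -w₆; w₄, -w₅, w₅, -w₄]

/-- Idempotent `U = (1 - P)/2`. -/
noncomputable def Umat : Matrix (Fin 4) (Fin 4) ℝ :=
  !![1/2, 0, 0, -1/2; 0, 1/2, -1/2, 0; 0, -1/2, 1/2, 0; -1/2, 0, 0, 1/2]

/-- Idempotent `V = 1 - U`. -/
noncomputable def Vmat : Matrix (Fin 4) (Fin 4) ℝ :=
  !![1/2, 0, 0, 1/2; 0, 1/2, 1/2, 0; 0, 1/2, 1/2, 0; 1/2, 0, 0, 1/2]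

lemma hMM (hw : w₄ ^ 2 - w₅ * w₆ = -1 / 4) : Mmat w₄ w₅ w₆ * Mmat w₄ w₅ w₆ = -Umat := by
  ext i j
  fin_cases i <;> fin_cases j <;>
    simp [Mmat, Umat, Matrix.mul_apply, Fin.sum_univ_four] <;>
    first
      | ring1
      | linear_combination 2 * hw
      | linear_combination (-2) * hw
      | linear_combination 4 * hw
      | linear_combination (-4) * hw

lemma hMU : Mmat w₄ w₅ w₆ * Umat = Mmat w₄ w₅ w₆ := by
  ext i j
  fin_cases i <;> fin_cases j <;>
    simp [Mmat, Umat, Matrix.mul_apply, Fin.sum_univ_four] <;> ring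

lemma hUM : Umat * Mmat w₄ w₅ w₆ = Mmat w₄ w₅ w₆ := by
  ext i j
  fin_cases i <;> fin_cases j <;>
    simp [Mmat, Umat, Matrix.mul_apply, Fin.sum_univ_four] <;> ring

lemma hMV : Mmat w₄ w₅ w₆ * Vmat = 0 := by
  ext i j
  fin_cases i <;> fin_cases j <;>
    simp [Mmat, Vmat, Matrix.mul_apply, Fin.sum_univ_four] <;> ring

lemma hVM : Vmat * Mmat w₄ w₅ w₆ = 0 := by
  ext i j
  fin_cases i <;> fin_cases j <;>
    simp [Mmat, Vmat, Matrix.mul_apply, Fin.sum_univ_four] <;> ring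

lemma hUU : Umat * Umat = Umat := by
  ext i j
  fin_cases i <;> fin_cases j <;>
    simp [Umat, Matrix.mul_apply, Fin.sum_univ_four] <;> ring

lemma hVV : Vmat * Vmat = Vmat := by
  ext i j
  fin_cases i <;> fin_cases j <;>
    simp [Vmat, Matrix.mul_apply, Fin.sum_univ_four] <;> ring

lemma hUV : Umat * Vmat = 0 := by
  ext i j
  fin_cases i <;> fin_cases j <;>
    simp [Umat, Vmat, Matrix.mul_apply, Fin.sum_univ_four] <;> ring

lemma hVU : Vmat * Umat = 0 := by
  ext i j
  fin_cases i <;> fin_cases j <;>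
    simp [Umat, Vmat, Matrix.mul_apply, Fin.sum_univ_four] <;> ring

lemma hUaddV : Umat + Vmat = 1 := by
  ext i j
  fin_cases i <;> fin_cases j <;>
    simp [Umat, Vmat, Matrix.one_apply] <;> norm_num

/-- The ring homomorphism `ℂ × ℝ → Mat₄(ℝ)`. -/
noncomputable def ψ (hw : w₄ ^ 2 - w₅ * w₆ = -1 / 4) : ℂ × ℝ →+* Matrix (Fin 4) (Fin 4) ℝ where
  toFun p := p.1.re • Umat + p.1.im • Mmat w₄ w₅ w₆ + p.2 • Vmat
  map_one' := by
    simp only [Prod.fst_one, Complex.one_re, Complex.one_im, Prod.snd_one, one_smul, zero_smul,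
      add_zero]
    exact hUaddV
  map_mul' p q := by
    simp only [Prod.fst_mul, Prod.snd_mul, Complex.mul_re, Complex.mul_im]
    rw [add_mul, add_mul, mul_add, mul_add, mul_add, mul_add, mul_add, mul_add]
    simp only [smul_mul_assoc, mul_smul_comm, hMM w₄ w₅ w₆ hw, hMU, hUM, hMV, hVM, hUU, hVV,
      hUV, hVU, smul_zero, smul_neg, smul_smul]
    module
  map_zero' := by simp
  map_add' p q := by
    simp only [Prod.fst_add, Prod.snd_add, Complex.add_re, Complex.add_im, add_smul]
    module

lemma ψ_continuous (hw : w₄ ^ 2 - w₅ * w₆ = -1 / 4) : Continuous (ψ w₄ w₅ w₆ hw) := by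
  show Continuous fun p : ℂ × ℝ => p.1.re • Umat + p.1.im • Mmat w₄ w₅ w₆ + p.2 • Vmat
  fun_prop

end ExpQmatAux

open ExpQmatAux in
theorem exp_Qmat_two_pi_k_eq_one (k : ℤ) (w₄ w₅ w₆ : ℝ)
    (hw : w₄ ^ 2 - w₅ * w₆ = -1 / 4) :
    NormedSpace.exp (Qmat (2 * π * k) ![0, 0, 0, w₄, w₅, w₆]) = 1 := by
  have hQ : Qmat (2 * π * k) ![0, 0, 0, w₄, w₅, w₆] =
      ψ w₄ w₅ w₆ hw (((2 * π * k : ℝ) : ℂ) * Complex.I, 0) := by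
    show _ = _ • Umat + _ • Mmat w₄ w₅ w₆ + _ • Vmat
    have h0 : ![(0:ℝ), 0, 0, w₄, w₅, w₆] 0 = 0 := rfl
    have h1 : ![(0:ℝ), 0, 0, w₄, w₅, w₆] 1 = 0 := rfl
    have h2 : ![(0:ℝ), 0, 0, w₄, w₅, w₆] 2 = 0 := rfl
    have h3 : ![(0:ℝ), 0, 0, w₄, w₅, w₆] 3 = w₄ := rfl
    have h4 : ![(0:ℝ), 0, 0, w₄, w₅, w₆] 4 = w₅ := rfl
    have h5 : ![(0:ℝ), 0, 0, w₄, w₅, w₆] 5 = w₆ := rfl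
    ext i j
    fin_cases i <;> fin_cases j <;>
      simp [Qmat, Mmat, Umat, Vmat, h0, h1, h2, h3, h4, h5] <;> ring
  have key : ∀ x : ℂ × ℝ, NormedSpace.exp (ψ w₄ w₅ w₆ hw x)
      = ψ w₄ w₅ w₆ hw (NormedSpace.exp x) := by
    intro x
    letI : SeminormedRing (Matrix (Fin 4) (Fin 4) ℝ) := Matrix.linftyOpSemiNormedRing
    letI : NormedRing (Matrix (Fin 4) (Fin 4) ℝ) := Matrix.linftyOpNormedRing
    letI : NormedAlgebra ℝ (Matrix (Fin 4) (Fin 4) ℝ) := Matrix.linftyOpNormedAlgebra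
    exact (NormedSpace.map_exp (ψ w₄ w₅ w₆ hw) (ψ_continuous w₄ w₅ w₆ hw) x).symm
  rw [hQ, key]
  have hexp : NormedSpace.exp ((((2 * π * k : ℝ) : ℂ) * Complex.I, 0) : ℂ × ℝ) = 1 := by
    ext
    · rw [Prod.fst_exp]
      show NormedSpace.exp _ = (1 : ℂ)
      rw [← Complex.exp_eq_exp_ℂ]
      have h2 : ((2 * π * k : ℝ) : ℂ) * Complex.I = k * (2 * π * Complex.I) := by
        push_cast; ring
      rw [h2, Complex.exp_int_mul_two_pi_mul_I]
    · rw [Prod.snd_exp]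
      simpa using NormedSpace.exp_zero (𝔸 := ℝ)
  rw [hexp, _root_.map_one]
end

section
/- For any θ ∈ (−π, π), v ∈ ℝ⁶ with v₄² − v₅v₆ = −1/4, and integer k, one has exp(Q(θ + 2πk, v)) = exp(Q(θ, v)). -/
open Matrix Real

/-- The derivative part `A(v)`, so that `Qmat θ v = Qmat 0 v + θ • Amat v`. -/
def Amat (v : Fin 6 → ℝ) : Matrix (Fin 4) (Fin 4) ℝ :=
  !![-v 3, v 4, -v 4, v 3;
     -v 5, v 3, -v 3, v 5;
      v 5, -v 3, v 3, -v 5;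
      v 3, -v 4, v 4, -v 3]

/-- An idempotent with `Amat v * Amat v = -pmat` under the constraint. -/
noncomputable def pmat : Matrix (Fin 4) (Fin 4) ℝ :=
  !![1/2, 0, 0, -1/2;
     0, 1/2, -1/2, 0;
     0, -1/2, 1/2, 0;
     -1/2, 0, 0, 1/2]

lemma pmat_mul_pmat : pmat * pmat = pmat := by
  show (pmat : Matrix (Fin 4) (Fin 4) ℝ) * pmat = pmat
  ext i j
  fin_cases i <;> fin_cases j <;>
    simp [pmat, Matrix.mul_apply, Fin.sum_univ_four] <;> ring

lemma pmat_mul_Amat (v : Fin 6 → ℝ) : pmat * Amat v = Amat v := by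
  ext i j
  fin_cases i <;> fin_cases j <;>
    simp [pmat, Amat, Matrix.mul_apply, Fin.sum_univ_four] <;> ring

lemma Amat_mul_pmat (v : Fin 6 → ℝ) : Amat v * pmat = Amat v := by
  ext i j
  fin_cases i <;> fin_cases j <;>
    simp [pmat, Amat, Matrix.mul_apply, Fin.sum_univ_four] <;> ring

lemma Amat_mul_Amat (v : Fin 6 → ℝ) (hv : v 3 ^ 2 - v 4 * v 5 = -1 / 4) :
    Amat v * Amat v = -pmat := by
  ext i j
  fin_cases i <;> fin_cases j <;>
    simp [pmat, Amat, Matrix.mul_apply, Fin.sum_univ_four]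
  all_goals
    first
    | linear_combination (2 : ℝ) * hv
    | linear_combination (-2 : ℝ) * hv
    | ring

/-- Ring homomorphism `ℝ × ℂ → M₄(ℝ)` sending `(r, z)` to
`r • (1 - pmat) + z.re • pmat + z.im • Amat v`. -/
noncomputable def psi (v : Fin 6 → ℝ) (hv : v 3 ^ 2 - v 4 * v 5 = -1 / 4) :
    ℝ × ℂ →+* Matrix (Fin 4) (Fin 4) ℝ where
  toFun x := x.1 • (1 - pmat) + x.2.re • pmat + x.2.im • Amat v
  map_one' := by
    simp only [Prod.fst_one, Prod.snd_one, Complex.one_re, Complex.one_im, one_smul, zero_smul,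
      add_zero]
    abel
  map_mul' x y := by
    have h1 := pmat_mul_pmat
    have h2 := pmat_mul_Amat v
    have h3 := Amat_mul_pmat v
    have h4 := Amat_mul_Amat v hv
    simp only [Prod.fst_mul, Prod.snd_mul, Complex.mul_re, Complex.mul_im]
    simp only [add_mul, mul_add, smul_mul_assoc, mul_smul_comm, sub_mul, mul_sub, one_mul,
      mul_one, h1, h2, h3, h4, smul_smul, smul_sub, smul_add, smul_neg, sub_smul, add_smul,
      mul_comm x.2.re y.2.re]
    module
  map_zero' := by simp
  map_add' x y := by
    simp only [Prod.fst_add, Prod.snd_add, Complex.add_re, Complex.add_im, add_smul]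
    abel

lemma psi_continuous (v : Fin 6 → ℝ) (hv : v 3 ^ 2 - v 4 * v 5 = -1 / 4) :
    Continuous (psi v hv) := by
  show Continuous fun x : ℝ × ℂ => x.1 • (1 - pmat) + x.2.re • pmat + x.2.im • Amat v
  fun_prop

lemma Qmat_split (θ s : ℝ) (v : Fin 6 → ℝ) :
    Qmat (θ + s) v = Qmat θ v + s • Amat v := by
  ext i j
  fin_cases i <;> fin_cases j <;> simp [Qmat, Amat] <;> ring

lemma Qmat_commute_Amat (θ : ℝ) (v : Fin 6 → ℝ) : Commute (Qmat θ v) (Amat v) := by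
  show Qmat θ v * Amat v = Amat v * Qmat θ v
  ext i j
  fin_cases i <;> fin_cases j <;>
    simp [Qmat, Amat, Matrix.mul_apply, Fin.sum_univ_four] <;> ring

lemma exp_smul_Amat (v : Fin 6 → ℝ) (hv : v 3 ^ 2 - v 4 * v 5 = -1 / 4) (k : ℤ) :
    NormedSpace.exp ((2 * π * k : ℝ) • Amat v) = 1 := by
  letI : SeminormedRing (Matrix (Fin 4) (Fin 4) ℝ) := Matrix.linftyOpSemiNormedRing
  letI : NormedRing (Matrix (Fin 4) (Fin 4) ℝ) := Matrix.linftyOpNormedRing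
  letI : NormedAlgebra ℝ (Matrix (Fin 4) (Fin 4) ℝ) := Matrix.linftyOpNormedAlgebra
  have hval : (2 * π * k : ℝ) • Amat v = psi v hv (0, (2 * π * k : ℝ) * Complex.I) := by
    show _ = (0 : ℝ) • (1 - pmat) + _ • pmat + _ • Amat v
    simp
  rw [hval]
  erw [← NormedSpace.map_exp (psi v hv) (psi_continuous v hv)]
  have hexp : NormedSpace.exp ((0 : ℝ), ((2 * π * k : ℝ) * Complex.I : ℂ)) = 1 := by
    have h1 : (NormedSpace.exp ((0 : ℝ), ((2 * π * k : ℝ) * Complex.I : ℂ))).1 = 1 := by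
      rw [Prod.fst_exp]; simp [NormedSpace.exp_zero]
    have h2 : (NormedSpace.exp ((0 : ℝ), ((2 * π * k : ℝ) * Complex.I : ℂ))).2 = 1 := by
      rw [Prod.snd_exp]
      have : (NormedSpace.exp (((2 * π * k : ℝ) * Complex.I : ℂ)))
          = NormedSpace.exp (((2 * π * k : ℝ) * Complex.I : ℂ)) := by
        rfl
      rw [this, ← Complex.exp_eq_exp_ℂ]
      have := Complex.exp_int_mul_two_pi_mul_I k
      rw [← this]
      congr 1
      push_cast
      ring
    have := Prod.mk.eta (p := NormedSpace.exp ((0 : ℝ), ((2 * π * k : ℝ) * Complex.I : ℂ)))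
    rw [← this, h1, h2]
    rfl
  rw [hexp, _root_.map_one]

theorem exp_Qmat_periodic (θ : ℝ) (hθ : θ ∈ Set.Ioo (-π) π) (v : Fin 6 → ℝ)
    (hv : v 3 ^ 2 - v 4 * v 5 = -1 / 4) (k : ℤ) :
    NormedSpace.exp (Qmat (θ + 2 * π * k) v) = NormedSpace.exp (Qmat θ v) := by
  rw [Qmat_split θ (2 * π * k) v]
  have hcomm : Commute (Qmat θ v) ((2 * π * k : ℝ) • Amat v) :=
    (Qmat_commute_Amat θ v).smul_right _
  rw [Matrix.exp_add_of_commute _ _ hcomm, exp_smul_Amat v hv k, mul_one]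
end

section
/- The spectrum of Q(θ, v) over the complex numbers, for v ∈ ℝ⁶ satisfying v₄² − v₅v₆ = −1/4, is {0, 4v₁, −2v₃ + θi, −2v₃ − θi}. -/
open Matrix Complex

set_option maxHeartbeats 1000000 in
lemma det_fin_four' {R : Type*} [CommRing R] (M : Matrix (Fin 4) (Fin 4) R) :
    M.det =
      M 0 0 * M 1 1 * M 2 2 * M 3 3 - M 0 0 * M 1 1 * M 2 3 * M 3 2 -
        M 0 0 * M 1 2 * M 2 1 * M 3 3 + M 0 0 * M 1 2 * M 2 3 * M 3 1 +
        M 0 0 * M 1 3 * M 2 1 * M 3 2 - M 0 0 * M 1 3 * M 2 2 * M 3 1 -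
        M 0 1 * M 1 0 * M 2 2 * M 3 3 + M 0 1 * M 1 0 * M 2 3 * M 3 2 +
        M 0 1 * M 1 2 * M 2 0 * M 3 3 - M 0 1 * M 1 2 * M 2 3 * M 3 0 -
        M 0 1 * M 1 3 * M 2 0 * M 3 2 + M 0 1 * M 1 3 * M 2 2 * M 3 0 +
        M 0 2 * M 1 0 * M 2 1 * M 3 3 - M 0 2 * M 1 0 * M 2 3 * M 3 1 -
        M 0 2 * M 1 1 * M 2 0 * M 3 3 + M 0 2 * M 1 1 * M 2 3 * M 3 0 +
        M 0 2 * M 1 3 * M 2 0 * M 3 1 - M 0 2 * M 1 3 * M 2 1 * M 3 0 -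
        M 0 3 * M 1 0 * M 2 1 * M 3 2 + M 0 3 * M 1 0 * M 2 2 * M 3 1 +
        M 0 3 * M 1 1 * M 2 0 * M 3 2 - M 0 3 * M 1 1 * M 2 2 * M 3 0 -
        M 0 3 * M 1 2 * M 2 0 * M 3 1 + M 0 3 * M 1 2 * M 2 1 * M 3 0 := by
  rw [Matrix.det_succ_row_zero, Fin.sum_univ_four]
  simp (config := { decide := true }) [Matrix.det_fin_three, Matrix.submatrix_apply,
    Fin.succAbove, Fin.lt_def, show ((2 : Fin 3).succ : Fin 4) = 3 from rfl, show ((2 : Fin 3).castSucc : Fin 4) = 2 from rfl]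
  ring

set_option maxHeartbeats 2000000 in
theorem Qmat_spectrum (θ : ℝ) (v : Fin 6 → ℝ)
    (hv : v 3 ^ 2 - v 4 * v 5 = -1 / 4) :
    spectrum ℂ ((Qmat θ v).map (Complex.ofReal)) =
      {0, 4 * (v 0 : ℂ), -2 * (v 2 : ℂ) + θ * I, -2 * (v 2 : ℂ) - θ * I} := by
  have hvC : (v 3 : ℂ) ^ 2 - v 4 * v 5 = -1 / 4 := by
    exact_mod_cast congrArg (Complex.ofReal) hv
  have hI : (I : ℂ) ^ 2 = -1 := Complex.I_sq
  ext μ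
  rw [spectrum.mem_iff, Matrix.isUnit_iff_isUnit_det, isUnit_iff_ne_zero, not_not]
  have hdet : ((algebraMap ℂ (Matrix (Fin 4) (Fin 4) ℂ)) μ -
      (Qmat θ v).map (Complex.ofReal)).det =
      μ * (μ - 4 * v 0) * (μ - (-2 * v 2 + θ * I)) * (μ - (-2 * v 2 - θ * I)) := by
    rw [det_fin_four']
    simp [Qmat, Matrix.algebraMap_matrix_apply, Matrix.sub_apply, Matrix.map_apply]
    linear_combination (-4 * (θ : ℂ) ^ 2 * μ * (μ - 4 * v 0)) * hvC +
      (μ * (μ - 4 * (v 0 : ℂ)) * θ ^ 2) * hI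
  rw [hdet]
  simp only [Set.mem_insert_iff, Set.mem_singleton_iff, mul_eq_zero, sub_eq_zero]
  tauto
end

section
/- Let θ ∈ (−π,π) and k a nonzero integer. If v ∈ ℝ⁶ is such that Q(θ+2πk, v) is a rate matrix but Q(θ, v) is not, then Q(θ,v)₁₂ ≥ 0, Q(θ,v)₁₃ ≥ 0, Q(θ,v)₂₁ ≥ 0, Q(θ,v)₂₄ ≥ 0, and exactly one of Q(θ,v)₁₄ < 0 or Q(θ,v)₂₃ < 0 holds. -/
open Matrix Real

/-- A rate matrix: nonnegative off-diagonal entries and rows summing to 0. -/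
def IsRate (M : Matrix (Fin 4) (Fin 4) ℝ) : Prop :=
  (∀ i j, i ≠ j → 0 ≤ M i j) ∧ ∀ i, ∑ j, M i j = 0

lemma key_ineq {s x θ φ : ℝ} (h1 : 0 ≤ s + φ * x) (h2 : 0 ≤ s - φ * x)
    (habs : |θ| ≤ |φ|) : 0 ≤ s + θ * x ∧ 0 ≤ s - θ * x := by
  have hφ : |φ * x| ≤ s := abs_le.mpr ⟨by linarith, by linarith⟩
  have hθ : |θ * x| ≤ |φ * x| := by
    rw [abs_mul, abs_mul]
    exact mul_le_mul_of_nonneg_right habs (abs_nonneg x)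
  exact ⟨by linarith [neg_abs_le (θ * x)], by linarith [le_abs_self (θ * x)]⟩

lemma Qmat_isRate_iff (θ : ℝ) (v : Fin 6 → ℝ) :
    IsRate (Qmat θ v) ↔ 0 ≤ -v 0 - v 1 + θ * v 4 ∧ 0 ≤ -v 0 - v 1 - θ * v 4 ∧
      0 ≤ -v 0 + v 1 + θ * v 5 ∧ 0 ≤ -v 0 + v 1 - θ * v 5 ∧
      0 ≤ v 0 + v 1 + v 2 + θ * v 3 ∧ 0 ≤ v 0 - v 1 + v 2 - θ * v 3 := by
  constructor
  · intro h
    refine ⟨h.1 0 1 (by decide), h.1 0 2 (by decide), h.1 1 3 (by decide),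
      h.1 1 0 (by decide), h.1 0 3 (by decide), h.1 1 2 (by decide)⟩
  · rintro ⟨h1, h2, h3, h4, h5, h6⟩
    constructor
    · intro i j hij
      fin_cases i <;> fin_cases j <;> first
        | exact absurd rfl hij
        | (show (0:ℝ) ≤ _; simp [Qmat]; linarith)
    · intro i
      fin_cases i <;> (show (_ : ℝ) = 0; simp [Qmat, Fin.sum_univ_four]; ring)

theorem nonRate_structure (θ : ℝ) (hθ : θ ∈ Set.Ioo (-π) π) (k : ℤ) (hk : k ≠ 0)
    (v : Fin 6 → ℝ) (hR : IsRate (Qmat (θ + 2 * π * k) v)) (hL : ¬ IsRate (Qmat θ v)) :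
    0 ≤ Qmat θ v 0 1 ∧ 0 ≤ Qmat θ v 0 2 ∧ 0 ≤ Qmat θ v 1 0 ∧ 0 ≤ Qmat θ v 1 3 ∧
    ((Qmat θ v 0 3 < 0) ↔ ¬ (Qmat θ v 1 2 < 0)) := by
  have hπ := Real.pi_pos
  have hθa : |θ| < π := abs_lt.mpr ⟨hθ.1, hθ.2⟩
  have hk1 : (1 : ℝ) ≤ |(k : ℝ)| := by
    have := Int.one_le_abs hk
    calc (1:ℝ) ≤ ((|k| : ℤ) : ℝ) := by exact_mod_cast this
    _ = |(k:ℝ)| := by push_cast; ring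
  have habs : |θ| ≤ |θ + 2 * π * k| := by
    have h2 : |2 * π * (k:ℝ)| ≤ |θ + 2 * π * k| + |θ| := by
      calc |2 * π * (k:ℝ)| = |(θ + 2 * π * k) + (-θ)| := by ring_nf
      _ ≤ |θ + 2 * π * k| + |(-θ)| := abs_add_le _ _
      _ = |θ + 2 * π * k| + |θ| := by rw [abs_neg]
    have h3 : |2 * π * (k:ℝ)| = 2 * π * |(k:ℝ)| := by
      rw [abs_mul, abs_of_pos (by linarith)]
    nlinarith
  rw [Qmat_isRate_iff] at hR
  rw [Qmat_isRate_iff] at hL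
  obtain ⟨hA1, hA2, hB1, hB2, hC, hD⟩ := hR
  obtain ⟨hA1', hA2'⟩ := key_ineq (s := -v 0 - v 1) (x := v 4) hA1 hA2 habs
  obtain ⟨hB1', hB2'⟩ := key_ineq (s := -v 0 + v 1) (x := v 5) hB1 hB2 habs
  push_neg at hL
  have e01 : Qmat θ v 0 1 = -v 0 - v 1 + θ * v 4 := rfl
  have e02 : Qmat θ v 0 2 = -v 0 - v 1 - θ * v 4 := rfl
  have e10 : Qmat θ v 1 0 = -v 0 + v 1 - θ * v 5 := rfl
  have e13 : Qmat θ v 1 3 = -v 0 + v 1 + θ * v 5 := rfl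
  have e03 : Qmat θ v 0 3 = v 0 + v 1 + v 2 + θ * v 3 := rfl
  have e12 : Qmat θ v 1 2 = v 0 - v 1 + v 2 - θ * v 3 := rfl
  rw [e01, e02, e10, e13, e03, e12]
  have hone : (v 0 + v 1 + v 2 + θ * v 3 < 0) ∨ (v 0 - v 1 + v 2 - θ * v 3 < 0) := by
    by_cases hC' : v 0 + v 1 + v 2 + θ * v 3 < 0
    · exact Or.inl hC'
    · exact Or.inr (hL hA1' hA2' hB1' hB2' (not_lt.mp hC'))
  refine ⟨hA1', hA2', hB2', hB1', ?_⟩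
  constructor
  · intro h h'; linarith
  · intro h
    rcases hone with h1 | h1
    · exact h1
    · exact absurd h1 h
end

section
/- For θ ∈ (−π,π), nonzero integer k, and v ∈ ℝ⁶, the map (v₁,v₂,v₃,v₄,v₅,v₆) ↦ (v₁,−v₂,v₃,−v₄,v₆,v₅) maps the set C₁ = {v : Q(θ+2πk,v) is a rate matrix, Q(θ,v)₁₄ < 0} bijectively onto the set C₂ = {v : Q(θ+2πk,v) is a rate matrix, Q(θ,v)₂₃ < 0}. -/
open Matrix Real

private def pperm : Equiv.Perm (Fin 4) :=
  ⟨![1, 3, 0, 2], ![2, 0, 3, 1], by decide, by decide⟩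

private lemma Qswap (α : ℝ) (v : Fin 6 → ℝ) :
    Qmat α ![v 0, -v 1, v 2, -v 3, v 5, v 4] = (Qmat α v).submatrix pperm pperm := by
  ext i j
  fin_cases i <;> fin_cases j <;>
    simp [Qmat, pperm, Matrix.submatrix_apply, show (5 : Fin 6) = (4 : Fin 5).succ from rfl,
      show (4 : Fin 6) = (3 : Fin 5).succ from rfl, Matrix.cons_val_succ] <;> ring

private lemma isRate_submatrix (M : Matrix (Fin 4) (Fin 4) ℝ) (e : Equiv.Perm (Fin 4)) :
    IsRate (M.submatrix e e) ↔ IsRate M := by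
  constructor
  · rintro ⟨h1, h2⟩
    refine ⟨fun i j hij => ?_, fun i => ?_⟩
    · have := h1 (e.symm i) (e.symm j) (fun h => hij (by simpa using congrArg e h))
      simpa using this
    · have := h2 (e.symm i)
      simpa [Matrix.submatrix_apply, Equiv.sum_comp e (M i)] using this
  · rintro ⟨h1, h2⟩
    refine ⟨fun i j hij => ?_, fun i => ?_⟩
    · exact h1 _ _ (fun h => hij (e.injective h))
    · simpa [Matrix.submatrix_apply, Equiv.sum_comp e (M (e i))] using h2 (e i)

private lemma sw_invol (v : Fin 6 → ℝ) :
    (fun v : Fin 6 → ℝ => ![v 0, -v 1, v 2, -v 3, v 5, v 4])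
      ((fun v : Fin 6 → ℝ => ![v 0, -v 1, v 2, -v 3, v 5, v 4]) v) = v := by
  funext i; fin_cases i <;>
    simp [show (5 : Fin 6) = (4 : Fin 5).succ from rfl,
      show (4 : Fin 6) = (3 : Fin 5).succ from rfl, Matrix.cons_val_succ]

theorem component_swap_bijection (θ : ℝ) (hθ : θ ∈ Set.Ioo (-π) π) (k : ℤ) (hk : k ≠ 0) :
    Set.BijOn (fun v : Fin 6 → ℝ => ![v 0, -v 1, v 2, -v 3, v 5, v 4])
      {v | IsRate (Qmat (θ + 2 * π * k) v) ∧ Qmat θ v 0 3 < 0}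
      {v | IsRate (Qmat (θ + 2 * π * k) v) ∧ Qmat θ v 1 2 < 0} := by
  set f := fun v : Fin 6 → ℝ => ![v 0, -v 1, v 2, -v 3, v 5, v 4] with hf
  have h12 : ∀ v : Fin 6 → ℝ, Qmat θ (f v) 1 2 = Qmat θ v 0 3 := by
    intro v
    simp only [hf, Qswap, Matrix.submatrix_apply]
    show Qmat θ v (pperm 1) (pperm 2) = _
    simp [pperm, Qmat]
  have h03 : ∀ v : Fin 6 → ℝ, Qmat θ (f v) 0 3 = Qmat θ v 1 2 := by
    intro v
    simp only [hf, Qswap, Matrix.submatrix_apply]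
    show Qmat θ v (pperm 0) (pperm 3) = _
    simp [pperm, Qmat]
  have hrate : ∀ v : Fin 6 → ℝ,
      IsRate (Qmat (θ + 2 * π * k) (f v)) ↔ IsRate (Qmat (θ + 2 * π * k) v) := by
    intro v
    rw [hf]
    rw [Qswap]
    exact isRate_submatrix _ _
  have hinv : Set.InvOn f f
      {v | IsRate (Qmat (θ + 2 * π * k) v) ∧ Qmat θ v 0 3 < 0}
      {v | IsRate (Qmat (θ + 2 * π * k) v) ∧ Qmat θ v 1 2 < 0} :=
    ⟨fun v _ => sw_invol v, fun v _ => sw_invol v⟩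
  refine hinv.bijOn (fun v hv => ?_) (fun v hv => ?_)
  · exact ⟨(hrate v).2 hv.1, (h12 v).symm ▸ hv.2⟩
  · refine ⟨(hrate v).2 hv.1, ?_⟩
    rw [h03 v]; exact hv.2
end

section
/- For every nonzero integer k and θ ∈ (−π,π), the vector u = (−|θ+2πk|, −|θ+2πk|/2, |θ+2πk|, sign(k)/2, 1, 1/2) satisfies u₄² − u₅u₆ = −1/4, Q(θ+2πk, u) is a rate matrix, and Q(θ, u) is not a rate matrix. -/
open Matrix Real

theorem vector_u_properties (k : ℤ) (hk : k ≠ 0) (θ : ℝ) (hθ : θ ∈ Set.Ioo (-π) π) :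
    let u : Fin 6 → ℝ :=
      ![-|θ + 2 * π * k|, -|θ + 2 * π * k| / 2, |θ + 2 * π * k|, (k.sign : ℝ) / 2, 1, 1 / 2]
    u 3 ^ 2 - u 4 * u 5 = -1 / 4 ∧
    IsRate (Qmat (θ + 2 * π * k) u) ∧
    ¬ IsRate (Qmat θ u) := by
  intro u
  obtain ⟨hθ1, hθ2⟩ := hθ
  have hpi := Real.pi_pos
  have u0 : u 0 = -|θ + 2 * π * k| := rfl
  have u1 : u 1 = -|θ + 2 * π * k| / 2 := rfl
  have u2 : u 2 = |θ + 2 * π * k| := rfl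
  have u3 : u 3 = (k.sign : ℝ) / 2 := rfl
  have u4 : u 4 = 1 := rfl
  have u5 : u 5 = 1 / 2 := rfl
  have hkey : ((k.sign : ℝ) = 1 ∧ π < θ + 2 * π * k) ∨
      ((k.sign : ℝ) = -1 ∧ θ + 2 * π * k < -π) := by
    rcases lt_or_gt_of_ne hk with h | h
    · have hk1 : (k : ℝ) ≤ -1 := by exact_mod_cast (by omega : k ≤ -1)
      refine Or.inr ⟨?_, by nlinarith⟩
      rw [Int.sign_eq_neg_one_iff_neg.mpr h]; norm_num
    · have hk1 : (1 : ℝ) ≤ (k : ℝ) := by exact_mod_cast (by omega : (1 : ℤ) ≤ k)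
      refine Or.inl ⟨?_, by nlinarith⟩
      rw [Int.sign_eq_one_iff_pos.mpr h]; norm_num
  have hsa : (k.sign : ℝ) * (θ + 2 * π * k) = |θ + 2 * π * k| := by
    rcases hkey with ⟨hs, h⟩ | ⟨hs, h⟩
    · rw [hs, abs_of_pos (by linarith)]; ring
    · rw [hs, abs_of_neg (by linarith)]; ring
  have hA : π < |θ + 2 * π * k| := by
    rcases hkey with ⟨_, h⟩ | ⟨_, h⟩
    · rw [abs_of_pos (by linarith)]; exact h
    · rw [abs_of_neg (by linarith)]; linarith
  refine ⟨?_, ⟨?_, ?_⟩, ?_⟩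
  · rw [u3, u4, u5]
    rcases hkey with ⟨hs, _⟩ | ⟨hs, _⟩ <;> rw [hs] <;> norm_num
  · intro i j hij
    fin_cases i <;> fin_cases j <;>
      first
        | exact absurd rfl hij
        | (simp [Qmat, u0, u1, u2, u3, u4, u5]
           linarith [le_abs_self (θ + 2 * π * (k : ℝ)), neg_abs_le (θ + 2 * π * (k : ℝ)), hsa,
             abs_nonneg (θ + 2 * π * (k : ℝ))])
  · intro i
    fin_cases i <;> simp [Qmat, u0, u1, u2, u3, u4, u5, Fin.sum_univ_four] <;> ring
  · rintro ⟨h1, -⟩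
    have h03 := h1 0 3 (by decide)
    simp [Qmat, u0, u1, u2, u3] at h03
    rcases hkey with ⟨hs, _⟩ | ⟨hs, _⟩ <;> rw [hs] at h03 <;> nlinarith
end

section
/- For every integer l ≥ 0, the 4×4 matrix L_k(l) = (π/4)·[[−9−20l−4k, 6+12l+8k, 2+12l−8k, 1−4l+4k], [1+4l−4k, −5−12l+4k, 1+4l−4k, 3+4l+4k], [3+4l+4k, 1+4l−4k, −5−12l+4k, 1+4l−4k], [1−4l+4k, 2+12l−8k, 6+12l+8k, −9−20l−4k]] is a rate matrix if and only if the integer k equals l. -/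
open Matrix Real

theorem Logk_rate_iff_nonneg_l (l k : ℤ) (hl : 0 ≤ l) :
    IsRate ((π / 4) •
      !![(-9 - 20 * l - 4 * k : ℝ), 6 + 12 * l + 8 * k, 2 + 12 * l - 8 * k, 1 - 4 * l + 4 * k;
         1 + 4 * l - 4 * k, -5 - 12 * l + 4 * k, 1 + 4 * l - 4 * k, 3 + 4 * l + 4 * k;
         3 + 4 * l + 4 * k, 1 + 4 * l - 4 * k, -5 - 12 * l + 4 * k, 1 + 4 * l - 4 * k;
         1 - 4 * l + 4 * k, 2 + 12 * l - 8 * k, 6 + 12 * l + 8 * k, -9 - 20 * l - 4 * k]) ↔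
    k = l := by
  have hπ : (0:ℝ) < π / 4 := by positivity
  constructor
  · rintro ⟨h, -⟩
    have h1 := h 0 3 (by decide)
    have h2 := h 1 0 (by decide)
    simp only [Matrix.smul_apply, Matrix.cons_val', Matrix.cons_val_zero, Matrix.cons_val_three,
      Matrix.cons_val_one, Matrix.head_cons, Matrix.empty_val', Matrix.cons_val_fin_one,
      Matrix.head_fin_const, smul_eq_mul] at h1 h2
    have h1' : (0:ℝ) ≤ 1 - 4 * l + 4 * k := nonneg_of_mul_nonneg_right h1 hπ
    have h2' : (0:ℝ) ≤ 1 + 4 * l - 4 * k := nonneg_of_mul_nonneg_right h2 hπ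
    have h1'' : (0:ℤ) ≤ 1 - 4 * l + 4 * k := by exact_mod_cast h1'
    have h2'' : (0:ℤ) ≤ 1 + 4 * l - 4 * k := by exact_mod_cast h2'
    omega
  · rintro rfl
    constructor
    · intro i j hij
      fin_cases i <;> fin_cases j <;> simp_all [Matrix.smul_apply] <;>
        nlinarith [pi_pos, (by exact_mod_cast hl : (0:ℝ) ≤ (k:ℝ))]
    · intro i
      fin_cases i <;>
        simp [Fin.sum_univ_four, Matrix.smul_apply, smul_eq_mul] <;> ring
end

section
/- For every integer l < 0, the 4×4 matrix L_k(l) = (π/4)·[[3+20l+4k, −12l+8k, −4−12l−8k, 1+4l−4k], [−1−4l−4k, −1+12l−4k, 1−4l+4k, 1−4l+4k], [1−4l+4k, 1−4l+4k, −1+12l−4k, −1−4l−4k], [1+4l−4k, −4−12l−8k, −12l+8k, 3+20l+4k]] is a rate matrix if and only if the integer k equals l. -/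
open Matrix Real

theorem Logk_rate_iff_neg_l (l k : ℤ) (hl : l < 0) :
    IsRate ((π / 4) •
      !![(3 + 20 * l + 4 * k : ℝ), -12 * l + 8 * k, -4 - 12 * l - 8 * k, 1 + 4 * l - 4 * k;
         -1 - 4 * l - 4 * k, -1 + 12 * l - 4 * k, 1 - 4 * l + 4 * k, 1 - 4 * l + 4 * k;
         1 - 4 * l + 4 * k, 1 - 4 * l + 4 * k, -1 + 12 * l - 4 * k, -1 - 4 * l - 4 * k;
         1 + 4 * l - 4 * k, -4 - 12 * l - 8 * k, -12 * l + 8 * k, 3 + 20 * l + 4 * k]) ↔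
    k = l := by
  have hpi : (0:ℝ) < π / 4 := by positivity
  constructor
  · rintro ⟨h1, _⟩
    have ha := h1 0 3 (by decide)
    have hb := h1 1 2 (by decide)
    simp only [Matrix.smul_apply, Matrix.cons_val', Matrix.cons_val_zero, Matrix.cons_val_one,
      Matrix.head_cons, Matrix.empty_val', Matrix.cons_val_fin_one, Matrix.head_fin_const,
      Matrix.cons_val_two, Matrix.cons_val_three, Matrix.tail_cons, smul_eq_mul] at ha hb
    have ha' : (0:ℝ) ≤ 1 + 4 * l - 4 * k := nonneg_of_mul_nonneg_right ha hpi
    have hb' : (0:ℝ) ≤ 1 - 4 * l + 4 * k := nonneg_of_mul_nonneg_right hb hpi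
    have ha'' : (0:ℤ) ≤ 1 + 4 * l - 4 * k := by exact_mod_cast ha'
    have hb'' : (0:ℤ) ≤ 1 - 4 * l + 4 * k := by exact_mod_cast hb'
    omega
  · rintro rfl
    have hl' : (k:ℝ) ≤ -1 := by exact_mod_cast (show k ≤ -1 by omega)
    constructor
    · intro i j hij
      fin_cases i <;> fin_cases j <;>
        first
          | exact absurd rfl hij
          | (simp [Matrix.smul_apply, Matrix.vecHead, Matrix.vecTail] <;>
             nlinarith [hl', hpi])
    · intro i
      fin_cases i <;> simp [Fin.sum_univ_four, Matrix.smul_apply] <;> ring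
end
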